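/- arXiv:1602.08835 — 4 statements merged into one kernel-verified Lean document; each statement's English description precedes it below -/
import Mathlib

section
/- Any CPTP map M of the general LOCC* form M = ∑_{i_A,i_B,o_A,o_B} p(i_A,i_B|o_A,o_B) A_{o_A|i_A} ⊗ B_{o_B|i_B}, where p is a conditional probability distribution and {A_{o_A|i_A}}_{o_A}, {B_{o_B|i_B}}_{o_B} are quantum instruments, can be rewritten in the ∞-shaped loop form M = ∑_{a,b} Ã_{a|b} ⊗ B̃_{b|a} where {Ã_{a|b}}_a and {B̃_{b|a}}_b are quantum instruments, via the substitution Ã_{(i_B,x)|(o_A,o_B)} := ∑_{i_A} p(i_A,i_B|o_A,o_B) A_{x|i_A} and B̃_{(o_A,o_B)|(i_B,x)} := δ_{x,o_A} B_{o_B|i_B}. -/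
/-! Alice's loop instrument, conditioned on Bob's outcome `(o_A, o_B)`, samples `(i_A, i_B)` from
`p(·,·|o_A,o_B)`, runs `A_{·|i_A}` and reports `(i_B, x)`; this is a convex combination of the
instruments `A_{·|i_A}`, hence again an instrument. Bob's loop instrument just runs `B_{·|i_B}`,
and the factor `δ_{x,o_A}` forces his guess `o_A` of Alice's outcome to be right, so summing over
`o_A` collapses the loop back to the LOCC* sum. -/

open Matrix BigOperators ComplexOrder Kronecker

noncomputable section

abbrev Mat (n : Type) [Fintype n] [DecidableEq n] : Type := Matrix n n ℂ

def sliceM {n : Type} [Fintype n] [DecidableEq n] {k : Type} (X : Matrix (n × k) (n × k) ℂ) (i j : k) :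
    Matrix n n ℂ := Matrix.of fun a b => X (a, i) (b, j)

def IsCP {n m : Type} [Fintype n][DecidableEq n][Fintype m][DecidableEq m]
    (M : Mat n →ₗ[ℂ] Mat m) : Prop :=
  ∀ (d : ℕ) (X : Matrix (n × Fin d) (n × Fin d) ℂ), X.PosSemidef →
    (Matrix.of fun p q : m × Fin d => (M (sliceM X p.2 q.2)) p.1 q.1).PosSemidef

def IsTP {n m : Type} [Fintype n][DecidableEq n][Fintype m][DecidableEq m]
    (M : Mat n →ₗ[ℂ] Mat m) : Prop := ∀ X : Mat n, (M X).trace = X.trace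

def tensorMap {nA mA nB mB : Type} [Fintype nA][DecidableEq nA][Fintype mA][DecidableEq mA]
    [Fintype nB][DecidableEq nB][Fintype mB][DecidableEq mB]
    (A : Mat nA →ₗ[ℂ] Mat mA) (B : Mat nB →ₗ[ℂ] Mat mB) :
    Mat (nA × nB) →ₗ[ℂ] Mat (mA × mB) where
  toFun X := ∑ c : nA, ∑ c' : nA, ∑ d : nB, ∑ d' : nB,
    X (c, d) (c', d') • ((A (Matrix.single c c' 1)) ⊗ₖ (B (Matrix.single d d' 1)))
  map_add' X Y := by
    simp [Matrix.add_apply, add_smul, Finset.sum_add_distrib]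
  map_smul' r X := by
    simp [Matrix.smul_apply, smul_smul, Finset.smul_sum]

section Channels

variable {n m : Type} [Fintype n] [DecidableEq n] [Fintype m] [DecidableEq m]

lemma IsCP.zero : IsCP (0 : Mat n →ₗ[ℂ] Mat m) := by
  intro d X _
  convert Matrix.PosSemidef.zero (n := m × Fin d) (R := ℂ)
  ext; simp

lemma IsCP.ite {M : Mat n →ₗ[ℂ] Mat m} (hM : IsCP M) (c : Prop) [Decidable c] :
    IsCP (if c then M else 0) := by
  split_ifs
  exacts [hM, IsCP.zero]

lemma IsCP.sum_smul {ι : Type} (s : Finset ι) {w : ι → ℝ} {M : ι → Mat n →ₗ[ℂ] Mat m}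
    (hw : ∀ i ∈ s, 0 ≤ w i) (hM : ∀ i ∈ s, IsCP (M i)) :
    IsCP (∑ i ∈ s, (w i : ℂ) • M i) := by
  intro d X hX
  have hsplit : (Matrix.of fun p q : m × Fin d =>
      ((∑ i ∈ s, (w i : ℂ) • M i) (sliceM X p.2 q.2)) p.1 q.1)
      = ∑ i ∈ s, (w i : ℂ) • Matrix.of fun p q : m × Fin d =>
          (M i (sliceM X p.2 q.2)) p.1 q.1 := by
    ext; simp [Matrix.sum_apply]
  rw [hsplit]
  exact posSemidef_sum s fun i hi =>
    (hM i hi d X hX).smul (by exact_mod_cast hw i hi : (0 : ℂ) ≤ w i)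

lemma IsTP.sum_smul {ι : Type} (s : Finset ι) {w : ι → ℂ} {M : ι → Mat n →ₗ[ℂ] Mat m}
    (hw : ∑ i ∈ s, w i = 1) (hM : ∀ i ∈ s, IsTP (M i)) :
    IsTP (∑ i ∈ s, w i • M i) := by
  intro X
  simp only [LinearMap.sum_apply, LinearMap.smul_apply, trace_sum, trace_smul, smul_eq_mul]
  rw [Finset.sum_congr rfl fun i hi => by rw [hM i hi X], ← Finset.sum_mul, hw, one_mul]

end Channels

section TensorMap

variable {nA mA nB mB : Type} [Fintype nA] [DecidableEq nA] [Fintype mA] [DecidableEq mA]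
  [Fintype nB] [DecidableEq nB] [Fintype mB] [DecidableEq mB]

lemma tensorMap_apply (A : Mat nA →ₗ[ℂ] Mat mA) (B : Mat nB →ₗ[ℂ] Mat mB) (X : Mat (nA × nB)) :
    tensorMap A B X = ∑ c : nA, ∑ c' : nA, ∑ d : nB, ∑ d' : nB,
      X (c, d) (c', d') • ((A (Matrix.single c c' 1)) ⊗ₖ (B (Matrix.single d d' 1))) := rfl

lemma tensorMap_zero_right (A : Mat nA →ₗ[ℂ] Mat mA) :
    tensorMap A (0 : Mat nB →ₗ[ℂ] Mat mB) = 0 := by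
  ext X : 1
  simp [tensorMap_apply]

def tensorMapLeft (B : Mat nB →ₗ[ℂ] Mat mB) :
    (Mat nA →ₗ[ℂ] Mat mA) →ₗ[ℂ] (Mat (nA × nB) →ₗ[ℂ] Mat (mA × mB)) where
  toFun A := tensorMap A B
  map_add' A A' := by
    ext X : 1
    simp only [tensorMap_apply, LinearMap.add_apply, add_kronecker, smul_add,
      Finset.sum_add_distrib]
  map_smul' c A := by
    ext X : 1
    simp only [tensorMap_apply, LinearMap.smul_apply, smul_kronecker, Finset.smul_sum,
      smul_comm c, RingHom.id_apply]

lemma tensorMap_sum_smul_left {ι : Type} (s : Finset ι) (c : ι → ℂ)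
    (A : ι → Mat nA →ₗ[ℂ] Mat mA) (B : Mat nB →ₗ[ℂ] Mat mB) :
    tensorMap (∑ i ∈ s, c i • A i) B = ∑ i ∈ s, c i • tensorMap (A i) B := by
  change tensorMapLeft B _ = ∑ i ∈ s, c i • tensorMapLeft B (A i)
  simp only [map_sum, map_smul]

end TensorMap

section LoopForm

variable {ιiA ιiB ιoA ιoB : Type} [Fintype ιiA] [Fintype ιiB] [Fintype ιoA] [Fintype ιoB]

lemma sum_prod_sum_smul_eq {R M : Type*} [Semiring R] [AddCommMonoid M] [Module R M]
    (p : ιiA → ιiB → R) (A : ιoA → ιiA → M) :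
    ∑ a : ιiB × ιoA, ∑ iA, p iA a.1 • A a.2 iA = ∑ iA, (∑ iB, p iA iB) • ∑ oA, A oA iA := by
  simp only [Fintype.sum_prod_type, Finset.sum_smul, Finset.smul_sum]
  conv_lhs => rw [Finset.sum_comm]
  conv_rhs => rw [Finset.sum_comm]
  exact Finset.sum_congr rfl fun _ _ => Finset.sum_comm

variable [DecidableEq ιoA]

lemma sum_prod_ite_fst_eq {M : Type*} [AddCommMonoid M] (B : ιoB → M) (x : ιoA) :
    ∑ b : ιoA × ιoB, (if x = b.1 then B b.2 else 0) = ∑ oB, B oB := by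
  simp [Fintype.sum_prod_type]

variable {nA mA nB mB : Type} [Fintype nA] [DecidableEq nA] [Fintype mA] [DecidableEq mA]
  [Fintype nB] [DecidableEq nB] [Fintype mB] [DecidableEq mB]

lemma sum_smul_tensorMap_eq_loop (p : ιiA → ιiB → ιoA → ιoB → ℂ)
    (A : ιoA → ιiA → Mat nA →ₗ[ℂ] Mat mA) (B : ιoB → ιiB → Mat nB →ₗ[ℂ] Mat mB) :
    ∑ iA, ∑ iB, ∑ oA, ∑ oB, p iA iB oA oB • tensorMap (A oA iA) (B oB iB)
      = ∑ a : ιiB × ιoA, ∑ b : ιoA × ιoB,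
          tensorMap (∑ iA, p iA a.1 b.1 b.2 • A a.2 iA) (if a.2 = b.1 then B b.2 a.1 else 0) := by
  simp only [tensorMap_sum_smul_left, apply_ite (tensorMap _), tensorMap_zero_right,
    Fintype.sum_prod_type_right, Finset.sum_ite_eq, Finset.mem_univ, if_true]
  conv_rhs => rw [Finset.sum_comm]
  rw [Finset.sum_comm]
  refine Finset.sum_congr rfl fun iB _ => ?_
  rw [Finset.sum_comm]
  exact Finset.sum_congr rfl fun oA _ => Finset.sum_comm

end LoopForm

theorem stmt_4_general (ιiA ιiB ιoA ιoB : Type)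
    [Fintype ιiA] [Fintype ιiB]
    [Fintype ιoA] [DecidableEq ιoA] [Fintype ιoB]
    (nA mA nB mB : ℕ)
    (p : ιiA → ιiB → ιoA → ιoB → ℝ)
    (hp0 : ∀ iA iB oA oB, 0 ≤ p iA iB oA oB)
    (hp1 : ∀ oA oB, ∑ iA, ∑ iB, p iA iB oA oB = 1)
    (A : ιoA → ιiA → (Mat (Fin nA) →ₗ[ℂ] Mat (Fin mA)))
    (B : ιoB → ιiB → (Mat (Fin nB) →ₗ[ℂ] Mat (Fin mB)))
    (hACP : ∀ oA iA, IsCP (A oA iA)) (hATP : ∀ iA, IsTP (∑ oA, A oA iA))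
    (hBCP : ∀ oB iB, IsCP (B oB iB)) (hBTP : ∀ iB, IsTP (∑ oB, B oB iB)) :
    (∀ (a : ιiB × ιoA) (b : ιoA × ιoB),
      IsCP (∑ iA, (p iA a.1 b.1 b.2 : ℂ) • A a.2 iA)) ∧
    (∀ b : ιoA × ιoB, IsTP (∑ a : ιiB × ιoA, ∑ iA, (p iA a.1 b.1 b.2 : ℂ) • A a.2 iA)) ∧
    (∀ (b : ιoA × ιoB) (a : ιiB × ιoA),
      IsCP (if a.2 = b.1 then B b.2 a.1 else 0)) ∧
    (∀ a : ιiB × ιoA, IsTP (∑ b : ιoA × ιoB, if a.2 = b.1 then B b.2 a.1 else 0)) ∧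
    (∑ iA, ∑ iB, ∑ oA, ∑ oB, (p iA iB oA oB : ℂ) • tensorMap (A oA iA) (B oB iB))
      = ∑ a : ιiB × ιoA, ∑ b : ιoA × ιoB,
          tensorMap (∑ iA, (p iA a.1 b.1 b.2 : ℂ) • A a.2 iA)
            (if a.2 = b.1 then B b.2 a.1 else 0) := by
  refine ⟨fun a b => IsCP.sum_smul _ (fun _ _ => hp0 _ _ _ _) (fun _ _ => hACP _ _),
    fun b => ?_, fun b a => (hBCP _ _).ite _, fun a => ?_, sum_smul_tensorMap_eq_loop _ A B⟩
  · have hmass : ∑ iA, ∑ iB, (p iA iB b.1 b.2 : ℂ) = 1 := by exact_mod_cast hp1 b.1 b.2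
    rw [sum_prod_sum_smul_eq (fun iA iB => (p iA iB b.1 b.2 : ℂ))]
    exact IsTP.sum_smul _ hmass fun iA _ => hATP iA
  · rw [sum_prod_ite_fst_eq (B · a.1)]
    exact hBTP a.1

/-- any CPTP map of the general LOCC* form (conditional probability
linking instruments) can be rewritten in the ∞-shaped loop form via the substitution
Ã_{(i_B,x)|(o_A,o_B)} := ∑_{i_A} p(i_A,i_B|o_A,o_B) A_{x|i_A},
B̃_{(o_A,o_B)|(i_B,x)} := δ_{x,o_A} B_{o_B|i_B}. -/
theorem stmt_4 (ιiA ιiB ιoA ιoB : Type)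
    [Fintype ιiA] [DecidableEq ιiA] [Fintype ιiB] [DecidableEq ιiB]
    [Fintype ιoA] [DecidableEq ιoA] [Fintype ιoB] [DecidableEq ιoB]
    (nA mA nB mB : ℕ)
    (p : ιiA → ιiB → ιoA → ιoB → ℝ)
    (hp0 : ∀ iA iB oA oB, 0 ≤ p iA iB oA oB)
    (hp1 : ∀ oA oB, ∑ iA, ∑ iB, p iA iB oA oB = 1)
    (A : ιoA → ιiA → (Mat (Fin nA) →ₗ[ℂ] Mat (Fin mA)))
    (B : ιoB → ιiB → (Mat (Fin nB) →ₗ[ℂ] Mat (Fin mB)))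
    (hACP : ∀ oA iA, IsCP (A oA iA)) (hATP : ∀ iA, IsTP (∑ oA, A oA iA))
    (hBCP : ∀ oB iB, IsCP (B oB iB)) (hBTP : ∀ iB, IsTP (∑ oB, B oB iB))
    (hM : IsTP (∑ iA, ∑ iB, ∑ oA, ∑ oB,
      (p iA iB oA oB : ℂ) • tensorMap (A oA iA) (B oB iB))) :
    (∀ (a : ιiB × ιoA) (b : ιoA × ιoB),
      IsCP (∑ iA, (p iA a.1 b.1 b.2 : ℂ) • A a.2 iA)) ∧
    (∀ b : ιoA × ιoB, IsTP (∑ a : ιiB × ιoA, ∑ iA, (p iA a.1 b.1 b.2 : ℂ) • A a.2 iA)) ∧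
    (∀ (b : ιoA × ιoB) (a : ιiB × ιoA),
      IsCP (if a.2 = b.1 then B b.2 a.1 else 0)) ∧
    (∀ a : ιiB × ιoA, IsTP (∑ b : ιoA × ιoB, if a.2 = b.1 then B b.2 a.1 else 0)) ∧
    (∑ iA, ∑ iB, ∑ oA, ∑ oB, (p iA iB oA oB : ℂ) • tensorMap (A oA iA) (B oB iB))
      = ∑ a : ιiB × ιoA, ∑ b : ιoA × ιoB,
          tensorMap (∑ iA, (p iA a.1 b.1 b.2 : ℂ) • A a.2 iA)
            (if a.2 = b.1 then B b.2 a.1 else 0) :=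
  stmt_4_general ιiA ιiB ιoA ιoB nA mA nB mB p hp0 hp1 A B hACP hATP hBCP hBTP
end
end

section
/- The LOCC* map constructed from the nine-state tables perfectly discriminates the nine orthogonal product states: for each k ∈ {1,...,9}, ∑_{a,b=1}^{3} (K^{(A)}_{a|b} ⊗ K^{(B)}_{b|a}) |ψ_k⟩⟨ψ_k| (K^{(A)}_{a|b} ⊗ K^{(B)}_{b|a})† = |k⟩⟨k| ⊗ |k⟩⟨k|, where the output is on C^9 ⊗ C^9. -/
open Matrix BigOperators ComplexOrder Kronecker

noncomputable section

/-- Computational basis ket of ℂ³. -/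
def ket3 (a : Fin 3) : Fin 3 → ℂ := Pi.single a 1

/-- Computational basis ket of ℂ⁹ (|k⟩ of the paper is `ket9 (k-1)`). -/
def ket9 (a : Fin 9) : Fin 9 → ℂ := Pi.single a 1

/-- The normalized superposition (|a⟩ + s|b⟩)/√2 (use s = 1 for |a+b⟩, s = −1 for |a−b⟩). -/
noncomputable def sup3 (a b : Fin 3) (s : ℂ) : Fin 3 → ℂ :=
  fun j => (ket3 a j + s * ket3 b j) / (Real.sqrt 2 : ℂ)

/-- The rank-one operator |k⟩⟨v| : ℂ³ → ℂ⁹. -/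
noncomputable def outer (k : Fin 9) (v : Fin 3 → ℂ) : Matrix (Fin 9) (Fin 3) ℂ :=
  Matrix.vecMulVec (ket9 k) (star v)

/-- Alice's Kraus operators K^{(A)}_{a|b}; first index a, second index b (0-based). -/
noncomputable def KA : Fin 3 → Fin 3 → Matrix (Fin 9) (Fin 3) ℂ :=
  ![![outer 0 (ket3 0), outer 1 (ket3 0), outer 2 (sup3 0 1 1)],
    ![outer 7 (sup3 1 2 (-1)), outer 8 (ket3 1), outer 3 (sup3 0 1 (-1))],
    ![outer 6 (sup3 1 2 1), outer 5 (ket3 2), outer 4 (ket3 2)]]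

/-- Bob's Kraus operators K^{(B)}_{b|a}; first index b, second index a (0-based). -/
noncomputable def KB : Fin 3 → Fin 3 → Matrix (Fin 9) (Fin 3) ℂ :=
  ![![outer 0 (sup3 0 1 1), outer 7 (ket3 0), outer 6 (ket3 0)],
    ![outer 1 (sup3 0 1 (-1)), outer 8 (ket3 1), outer 5 (sup3 1 2 (-1))],
    ![outer 2 (ket3 2), outer 3 (ket3 2), outer 4 (sup3 1 2 1)]]

/-- The nine orthogonal product states |ψ_k⟩ ∈ ℂ³ ⊗ ℂ³ (|ψ_k⟩ of the paper is `psi (k-1)`). -/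
noncomputable def psi : Fin 9 → (Fin 3 × Fin 3 → ℂ) :=
  ![fun p => ket3 0 p.1 * sup3 0 1 1 p.2,
    fun p => ket3 0 p.1 * sup3 0 1 (-1) p.2,
    fun p => sup3 0 1 1 p.1 * ket3 2 p.2,
    fun p => sup3 0 1 (-1) p.1 * ket3 2 p.2,
    fun p => ket3 2 p.1 * sup3 1 2 1 p.2,
    fun p => ket3 2 p.1 * sup3 1 2 (-1) p.2,
    fun p => sup3 1 2 1 p.1 * ket3 0 p.2,
    fun p => sup3 1 2 (-1) p.1 * ket3 0 p.2,
    fun p => ket3 1 p.1 * ket3 1 p.2]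


/-! Each operator `KA a b ⊗ₖ KB b a` is a rank-one map `|i j⟩⟨v ⊗ w|`, so it sends the product
state `|x ⊗ y⟩⟨x ⊗ y|` to `|⟨v|x⟩|² |⟨w|y⟩|² |i j⟩⟨i j|`. The kets `|0⟩, |1⟩, |2⟩` are orthonormal
and so are `|a+b⟩, |a−b⟩`; hence for each `ψ_k` one pair `(a, b)` has weight `1` and output
`|k k⟩`, and every other pair meets an orthogonal bra on Alice's or on Bob's side. -/

section RankOne

variable {l m l' m' : Type*}

theorem vecMulVec_kronecker_vecMulVec {α : Type*} [CommSemigroup α]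
    (u : l → α) (v : m → α) (u' : l' → α) (v' : m' → α) :
    vecMulVec u v ⊗ₖ vecMulVec u' v' =
      vecMulVec (fun p => u p.1 * u' p.2) (fun p => v p.1 * v' p.2) := by
  ext ⟨i, i'⟩ ⟨j, j'⟩
  simp only [kroneckerMap_apply, vecMulVec_apply]
  ac_rfl

theorem star_prod_vec {α : Type*} [CommMonoid α] [StarMul α] (w : m → α) (w' : m' → α) :
    (star fun p : m × m' => w p.1 * w' p.2) = fun p => star w p.1 * star w' p.2 := by
  ext p
  simp

variable [Fintype m]

theorem vecMulVec_star_conj_vecMulVec_star (u : l → ℂ) (v x : m → ℂ) :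
    vecMulVec u (star v) * vecMulVec x (star x) * (vecMulVec u (star v))ᴴ =
      (Complex.normSq (star v ⬝ᵥ x) : ℂ) • vecMulVec u (star u) := by
  rw [conjTranspose_vecMulVec, vecMulVec_mul_vecMulVec, vecMulVec_mul_vecMulVec, star_star,
    smul_dotProduct, star_dotProduct x v, smul_eq_mul, vecMulVec_smul, Complex.star_def,
    Complex.mul_conj]

variable [Fintype m']

theorem dotProduct_prod_vec {α : Type*} [CommSemiring α] (v x : m → α) (v' y : m' → α) :
    (fun p : m × m' => v p.1 * v' p.2) ⬝ᵥ (fun p => x p.1 * y p.2) = (v ⬝ᵥ x) * (v' ⬝ᵥ y) := by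
  simp only [dotProduct, Fintype.sum_prod_type, Finset.sum_mul_sum]
  refine Finset.sum_congr rfl fun i _ => Finset.sum_congr rfl fun j _ => ?_
  ring

theorem kronecker_vecMulVec_star_conj_prod_vec (u : l → ℂ) (u' : l' → ℂ) (v x : m → ℂ)
    (v' y : m' → ℂ) :
    (vecMulVec u (star v) ⊗ₖ vecMulVec u' (star v')) *
        vecMulVec (fun p : m × m' => x p.1 * y p.2) (star fun p : m × m' => x p.1 * y p.2) *
        (vecMulVec u (star v) ⊗ₖ vecMulVec u' (star v'))ᴴ =
      (Complex.normSq (star v ⬝ᵥ x) * Complex.normSq (star v' ⬝ᵥ y) : ℂ) •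
        (vecMulVec u (star u) ⊗ₖ vecMulVec u' (star u')) := by
  simp only [vecMulVec_kronecker_vecMulVec]
  rw [← star_prod_vec v, ← star_prod_vec u, vecMulVec_star_conj_vecMulVec_star, star_prod_vec,
    dotProduct_prod_vec, map_mul, Complex.ofReal_mul]

end RankOne

theorem sup3_apply_of_ne {a b c : Fin 3} (hca : c ≠ a) (hcb : c ≠ b) (s : ℂ) :
    sup3 a b s c = 0 := by
  simp [sup3, ket3, hca, hcb]

theorem star_sup3 (a b : Fin 3) (s : ℂ) :
    star (sup3 a b s) = (Real.sqrt 2 : ℂ)⁻¹ • (ket3 a + star s • ket3 b) := by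
  ext j
  simp [sup3, ket3, div_eq_inv_mul, Pi.single_apply, apply_ite (starRingEnd ℂ)]

theorem star_sup3_dotProduct (a b : Fin 3) (s : ℂ) (w : Fin 3 → ℂ) :
    star (sup3 a b s) ⬝ᵥ w = (w a + star s * w b) / Real.sqrt 2 := by
  rw [star_sup3, smul_dotProduct, add_dotProduct, smul_dotProduct]
  simp [ket3, single_dotProduct, div_eq_inv_mul]

theorem star_sup3_dotProduct_sup3 {a b : Fin 3} (hab : a ≠ b) (s t : ℂ) :
    star (sup3 a b s) ⬝ᵥ sup3 a b t = (1 + star s * t) / 2 := by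
  have sqrt_two_sq : (Real.sqrt 2 : ℂ) ^ 2 = 2 := by
    rw [← Complex.ofReal_pow, Real.sq_sqrt zero_le_two, Complex.ofReal_ofNat]
  simp [star_sup3_dotProduct, sup3, ket3, hab, hab.symm]
  field_simp
  rw [sqrt_two_sq]
  ring

/-- the LOCC* map from the nine-state tables perfectly discriminates the
nine states: ∑_{a,b} (K^A_{a|b} ⊗ K^B_{b|a}) |ψ_k⟩⟨ψ_k| (K^A_{a|b} ⊗ K^B_{b|a})†
= |k⟩⟨k| ⊗ |k⟩⟨k|. -/
theorem stmt_7 :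
    ∀ k : Fin 9,
      ∑ a : Fin 3, ∑ b : Fin 3,
        ((KA a b) ⊗ₖ (KB b a)) * Matrix.vecMulVec (psi k) (star (psi k)) *
          ((KA a b) ⊗ₖ (KB b a))ᴴ
      = (Matrix.vecMulVec (ket9 k) (star (ket9 k))) ⊗ₖ
          (Matrix.vecMulVec (ket9 k) (star (ket9 k))) := by
  intro k
  fin_cases k <;>
  · simp only [Fin.sum_univ_three, KA, KB, outer, psi, Fin.zero_eta, Fin.mk_one, Fin.reduceFinMk,
      cons_val, kronecker_vecMulVec_star_conj_prod_vec]
    simp [ket3, sup3_apply_of_ne, star_sup3_dotProduct_sup3]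
end
end

section
/- Let p(i_A,i_B|o_A,o_B) be a conditional probability distribution (nonnegative, summing to 1 over (i_A,i_B) for each fixed (o_A,o_B)). Then the following are equivalent: (1) ∑_{i_A,i_B,o_A,o_B} p(i_A,i_B|o_A,o_B) p_A(o_A|i_A) p_B(o_B|i_B) = 1 for all conditional probability distributions p_A and p_B; (2) for all finite-dimensional quantum instruments {A_{o_A|i_A}}_{o_A} and {B_{o_B|i_B}}_{o_B}, the map ∑_{i_A,i_B,o_A,o_B} p(i_A,i_B|o_A,o_B) A_{o_A|i_A} ⊗ B_{o_B|i_B} is CPTP. -/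
open Matrix BigOperators ComplexOrder Kronecker

noncomputable section

/-!
Complete positivity of the combined map holds for any `p ≥ 0`: via Choi matrices, complete
positivity is positive semidefiniteness, and the Choi matrix of `A ⊗ B` is a reindexed Kronecker
product of Choi matrices. For trace preservation, on a product `ρ ⊗ σ` of density matrices the trace of the
output is `∑ p(iA,iB|oA,oB) qA(oA|iA) qB(oB|iB)` with `qA = tr A_{oA|iA}(ρ)` and
`qB = tr B_{oB|iB}(σ)` conditional distributions, which is `1 = tr(ρ ⊗ σ)` by hypothesis; since
density matrices span all matrices, products of them span the bipartite matrices, so the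
combined map preserves all traces. Conversely, one-dimensional instruments `A_{o|i} = pA(o|i)`
and `B_{o|i} = pB(o|i)` turn the trace of the output into the classical sum.
-/

section Density
variable {n m : Type} [Fintype n] [DecidableEq n] [Fintype m] [DecidableEq m]

open scoped Matrix.Norms.L2Operator MatrixOrder in
theorem Matrix.span_posSemidef : Submodule.span ℂ {A : Mat n | A.PosSemidef} = ⊤ := by
  simpa only [Matrix.nonneg_iff_posSemidef] using CStarAlgebra.span_nonneg (A := Mat n)

theorem linearMap_ext_density {M : Type} [AddCommGroup M] [Module ℂ M] {f g : Mat n →ₗ[ℂ] M}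
    (h : ∀ ρ : Mat n, ρ.PosSemidef → ρ.trace = 1 → f ρ = g ρ) : f = g := by
  refine LinearMap.ext_on Matrix.span_posSemidef fun A hA => ?_
  by_cases htr : A.trace = 0
  · rw [(Matrix.PosSemidef.trace_eq_zero_iff hA).mp htr, map_zero, map_zero]
  · have hρ : (A.trace⁻¹ • A).PosSemidef := hA.smul (inv_nonneg.mpr hA.trace_nonneg)
    have := h _ hρ (by rw [Matrix.trace_smul, smul_eq_mul, inv_mul_cancel₀ htr])
    rw [map_smul, map_smul] at this
    exact smul_right_injective M (inv_ne_zero htr) this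

theorem linearMap_ext_kronecker_density {M : Type} [AddCommGroup M] [Module ℂ M]
    {f g : Mat (n × m) →ₗ[ℂ] M}
    (h : ∀ (ρ : Mat n) (σ : Mat m), ρ.PosSemidef → ρ.trace = 1 → σ.PosSemidef → σ.trace = 1 →
      f (ρ ⊗ₖ σ) = g (ρ ⊗ₖ σ)) : f = g := by
  have hfg : (kroneckerBilinear (R := ℂ)).compr₂ f = (kroneckerBilinear (R := ℂ)).compr₂ g :=
    linearMap_ext_density fun ρ hρ hρ1 => linearMap_ext_density fun σ hσ hσ1 =>
      h ρ σ hρ hρ1 hσ hσ1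
  refine Matrix.ext_linearMap _ fun x y => LinearMap.ext fun a => ?_
  have := LinearMap.congr_fun₂ hfg (Matrix.single x.1 y.1 a) (Matrix.single x.2 y.2 1)
  simpa [kroneckerBilinear, single_kronecker_single] using this

end Density

section Choi
variable {n m : Type} [Fintype n] [DecidableEq n] [Fintype m] [DecidableEq m]

def choi : (Mat n →ₗ[ℂ] Mat m) →ₗ[ℂ] Matrix (n × m) (n × m) ℂ where
  toFun M := Matrix.of fun x y => M (Matrix.single x.1 y.1 1) x.2 y.2
  map_add' M N := by ext; simp
  map_smul' c M := by ext; simp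

theorem choi_apply (M : Mat n →ₗ[ℂ] Mat m) (a b : n) (u v : m) :
    choi M (a, u) (b, v) = M (Matrix.single a b 1) u v := rfl

theorem apply_eq_sum_choi (M : Mat n →ₗ[ℂ] Mat m) (X : Mat n) (u v : m) :
    M X u v = ∑ a, ∑ b, X a b * choi M (a, u) (b, v) := by
  have hsingle : ∀ a b, Matrix.single a b (X a b) = X a b • Matrix.single a b 1 := by
    simp [Matrix.smul_single]
  conv_lhs => rw [Matrix.matrix_eq_sum_single X]
  simp only [hsingle, map_sum, map_smul, Matrix.sum_apply, Matrix.smul_apply, smul_eq_mul,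
    choi_apply]

theorem isCP_of_posSemidef_choi {M : Mat n →ₗ[ℂ] Mat m} (hM : (choi M).PosSemidef) :
    IsCP M := by
  intro d X hX
  -- the output is the compression of `X ⊗ₖ choi M` to the entries with `a = a'` and `b = b'`
  let V : Matrix ((n × Fin d) × (n × m)) (m × Fin d) ℂ :=
    Matrix.of fun x q => if x.1.1 = x.2.1 ∧ x.1.2 = q.2 ∧ x.2.2 = q.1 then 1 else 0
  have hY : (Matrix.of fun p q : m × Fin d => M (sliceM X p.2 q.2) p.1 q.1) =
      Vᴴ * (X ⊗ₖ choi M) * V := by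
    ext ⟨u, i⟩ ⟨v, j⟩
    simp [apply_eq_sum_choi M, sliceM, V, Matrix.mul_apply, Fintype.sum_prod_type, ite_and,
      apply_ite (starRingEnd ℂ), ite_mul, Finset.sum_ite_irrel, Finset.sum_ite_eq,
      Finset.sum_ite_eq']
    exact Finset.sum_comm
  rw [hY]
  exact (hX.kronecker hM).conjTranspose_mul_mul_same V

theorem posSemidef_choi_of_isCP {M : Mat n →ₗ[ℂ] Mat m} (hM : IsCP M) : (choi M).PosSemidef := by
  let e := Fintype.equivFin n
  -- the unnormalized maximally entangled vector `∑ₐ |a⟩ ⊗ |e a⟩`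
  let Ω : n × Fin (Fintype.card n) → ℂ := fun x => if e x.1 = x.2 then 1 else 0
  have hslice : ∀ a b, sliceM (vecMulVec Ω (star Ω)) (e a) (e b) = Matrix.single a b 1 := by
    intro a b
    ext a' b'
    simp only [sliceM, Ω, vecMulVec_apply, Matrix.single_apply, Matrix.of_apply, Pi.star_apply,
      e.apply_eq_iff_eq, eq_comm (a := a'), eq_comm (a := b')]
    split_ifs <;> simp_all
  have hchoi : choi M = (Matrix.of fun p q : m × Fin (Fintype.card n) =>
      M (sliceM (vecMulVec Ω (star Ω)) p.2 q.2) p.1 q.1).submatrix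
        (fun x => (x.2, e x.1)) (fun x => (x.2, e x.1)) := by
    ext ⟨a, u⟩ ⟨b, v⟩
    simp [choi_apply, hslice]
  rw [hchoi]
  exact (hM _ _ (posSemidef_vecMulVec_self_star Ω)).submatrix _

theorem isCP_iff_posSemidef_choi {M : Mat n →ₗ[ℂ] Mat m} : IsCP M ↔ (choi M).PosSemidef :=
  ⟨posSemidef_choi_of_isCP, isCP_of_posSemidef_choi⟩

end Choi

section TensorMap
variable {nA mA nB mB : Type} [Fintype nA] [DecidableEq nA] [Fintype mA] [DecidableEq mA]
  [Fintype nB] [DecidableEq nB] [Fintype mB] [DecidableEq mB]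

theorem tensorMap_kronecker (A : Mat nA →ₗ[ℂ] Mat mA) (B : Mat nB →ₗ[ℂ] Mat mB)
    (Y : Mat nA) (Z : Mat nB) : tensorMap A B (Y ⊗ₖ Z) = A Y ⊗ₖ B Z := by
  ext ⟨u, u'⟩ ⟨v, v'⟩
  rw [kronecker_apply, apply_eq_sum_choi A Y u v, apply_eq_sum_choi B Z u' v']
  simp only [tensorMap, LinearMap.coe_mk, AddHom.coe_mk, Matrix.sum_apply, Matrix.smul_apply,
    kronecker_apply, smul_eq_mul, Finset.sum_mul]
  simp only [Finset.mul_sum, choi_apply, mul_mul_mul_comm]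

theorem choi_tensorMap (A : Mat nA →ₗ[ℂ] Mat mA) (B : Mat nB →ₗ[ℂ] Mat mB) :
    choi (tensorMap A B) = (choi A ⊗ₖ choi B).submatrix
      (fun x => ((x.1.1, x.2.1), (x.1.2, x.2.2))) (fun x => ((x.1.1, x.2.1), (x.1.2, x.2.2))) := by
  ext ⟨⟨a, b⟩, u, u'⟩ ⟨⟨a', b'⟩, v, v'⟩
  rw [choi_apply, ← mul_one (1 : ℂ), ← single_kronecker_single, tensorMap_kronecker]
  rfl

end TensorMap

section CP
variable {n m : Type} [Fintype n] [DecidableEq n] [Fintype m] [DecidableEq m]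

theorem IsCP.smul {M : Mat n →ₗ[ℂ] Mat m} (hM : IsCP M) {c : ℝ} (hc : 0 ≤ c) :
    IsCP ((c : ℂ) • M) := by
  rw [isCP_iff_posSemidef_choi] at hM ⊢
  rw [map_smul]
  exact hM.smul (Complex.zero_le_real.mpr hc)

theorem isCP_sum {ι : Type} (s : Finset ι) {M : ι → Mat n →ₗ[ℂ] Mat m}
    (hM : ∀ i ∈ s, IsCP (M i)) : IsCP (∑ i ∈ s, M i) := by
  simp only [isCP_iff_posSemidef_choi, map_sum] at hM ⊢
  exact posSemidef_sum s hM

theorem isCP_id : IsCP (LinearMap.id : Mat n →ₗ[ℂ] Mat n) := fun _ _ hX => hX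

theorem IsCP.tensorMap {nB mB : Type} [Fintype nB] [DecidableEq nB] [Fintype mB] [DecidableEq mB]
    {A : Mat n →ₗ[ℂ] Mat m} {B : Mat nB →ₗ[ℂ] Mat mB} (hA : IsCP A) (hB : IsCP B) :
    IsCP (tensorMap A B) := by
  rw [isCP_iff_posSemidef_choi] at hA hB ⊢
  rw [choi_tensorMap]
  exact (hA.kronecker hB).submatrix _

theorem IsCP.posSemidef_apply {M : Mat n →ₗ[ℂ] Mat m} (hM : IsCP M) {X : Mat n}
    (hX : X.PosSemidef) : (M X).PosSemidef :=
  (hM 1 (X.submatrix Prod.fst Prod.fst) (hX.submatrix _)).submatrix fun u => (u, 0)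

end CP

def IsCondDistrib {ι ο : Type} [Fintype ο] (q : ι → ο → ℝ) : Prop :=
  (∀ i o, 0 ≤ q i o) ∧ ∀ i, ∑ o, q i o = 1

def IsInstrument {ι ο n m : Type} [Fintype ο] [Fintype n] [DecidableEq n] [Fintype m]
    [DecidableEq m] (A : ο → ι → (Mat n →ₗ[ℂ] Mat m)) : Prop :=
  (∀ o i, IsCP (A o i)) ∧ ∀ i, IsTP (∑ o, A o i)

section Instrument
variable {ι ο n m : Type} [Fintype ο] [Fintype n] [DecidableEq n] [Fintype m] [DecidableEq m]

theorem IsInstrument.exists_condDistrib {A : ο → ι → (Mat n →ₗ[ℂ] Mat m)} (hA : IsInstrument A)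
    {ρ : Mat n} (hρ : ρ.PosSemidef) (hρ1 : ρ.trace = 1) :
    ∃ q : ι → ο → ℝ, IsCondDistrib q ∧ ∀ i o, (A o i ρ).trace = q i o := by
  have hnonneg : ∀ i o, 0 ≤ (A o i ρ).trace := fun i o =>
    ((hA.1 o i).posSemidef_apply hρ).trace_nonneg
  refine ⟨fun i o => (A o i ρ).trace.re, ⟨fun i o => (Complex.nonneg_iff.mp (hnonneg i o)).1,
    fun i => ?_⟩, fun i o => Complex.eq_re_of_ofReal_le (r := 0) (by simpa using hnonneg i o)⟩
  have := congrArg Complex.re (hA.2 i ρ)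
  simpa [LinearMap.sum_apply, Matrix.trace_sum, hρ1] using this

theorem IsCondDistrib.isInstrument_smul_id {q : ι → ο → ℝ} (hq : IsCondDistrib q) :
    IsInstrument fun o i => (q i o : ℂ) • (LinearMap.id : Mat n →ₗ[ℂ] Mat n) := by
  refine ⟨fun o i => isCP_id.smul (hq.1 i o), fun i X => ?_⟩
  simp [← Finset.sum_smul, ← Complex.ofReal_sum, hq.2 i]

end Instrument

section ProcessMap
variable {ιiA ιiB ιoA ιoB : Type} [Fintype ιiA] [Fintype ιiB] [Fintype ιoA] [Fintype ιoB]
  {nA mA nB mB : Type} [Fintype nA] [DecidableEq nA] [Fintype mA] [DecidableEq mA]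
  [Fintype nB] [DecidableEq nB] [Fintype mB] [DecidableEq mB]

def processMap (p : ιiA → ιiB → ιoA → ιoB → ℝ) (A : ιoA → ιiA → (Mat nA →ₗ[ℂ] Mat mA))
    (B : ιoB → ιiB → (Mat nB →ₗ[ℂ] Mat mB)) : Mat (nA × nB) →ₗ[ℂ] Mat (mA × mB) :=
  ∑ iA, ∑ iB, ∑ oA, ∑ oB, (p iA iB oA oB : ℂ) • tensorMap (A oA iA) (B oB iB)

theorem trace_processMap_kronecker (p : ιiA → ιiB → ιoA → ιoB → ℝ)
    (A : ιoA → ιiA → (Mat nA →ₗ[ℂ] Mat mA)) (B : ιoB → ιiB → (Mat nB →ₗ[ℂ] Mat mB))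
    (Y : Mat nA) (Z : Mat nB) :
    (processMap p A B (Y ⊗ₖ Z)).trace =
      ∑ iA, ∑ iB, ∑ oA, ∑ oB, (p iA iB oA oB : ℂ) * (A oA iA Y).trace * (B oB iB Z).trace := by
  simp [processMap, LinearMap.sum_apply, Matrix.trace_sum, tensorMap_kronecker,
    Matrix.trace_kronecker, mul_assoc]

theorem isCP_processMap {p : ιiA → ιiB → ιoA → ιoB → ℝ} (hp : ∀ iA iB oA oB, 0 ≤ p iA iB oA oB)
    {A : ιoA → ιiA → (Mat nA →ₗ[ℂ] Mat mA)} {B : ιoB → ιiB → (Mat nB →ₗ[ℂ] Mat mB)}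
    (hA : ∀ oA iA, IsCP (A oA iA)) (hB : ∀ oB iB, IsCP (B oB iB)) : IsCP (processMap p A B) :=
  isCP_sum _ fun iA _ => isCP_sum _ fun iB _ => isCP_sum _ fun oA _ => isCP_sum _ fun oB _ =>
    ((hA oA iA).tensorMap (hB oB iB)).smul (hp iA iB oA oB)

theorem isTP_processMap {p : ιiA → ιiB → ιoA → ιoB → ℝ}
    (hp : ∀ (qA : ιiA → ιoA → ℝ) (qB : ιiB → ιoB → ℝ), IsCondDistrib qA → IsCondDistrib qB →
      ∑ iA, ∑ iB, ∑ oA, ∑ oB, p iA iB oA oB * qA iA oA * qB iB oB = 1)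
    {A : ιoA → ιiA → (Mat nA →ₗ[ℂ] Mat mA)} {B : ιoB → ιiB → (Mat nB →ₗ[ℂ] Mat mB)}
    (hA : IsInstrument A) (hB : IsInstrument B) : IsTP (processMap p A B) := by
  suffices Matrix.traceLinearMap _ ℂ ℂ ∘ₗ processMap p A B = Matrix.traceLinearMap _ ℂ ℂ from
    fun X => LinearMap.congr_fun this X
  refine linearMap_ext_kronecker_density fun ρ σ hρ hρ1 hσ hσ1 => ?_
  obtain ⟨qA, hqA, hAq⟩ := hA.exists_condDistrib hρ hρ1
  obtain ⟨qB, hqB, hBq⟩ := hB.exists_condDistrib hσ hσ1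
  simp only [LinearMap.comp_apply, Matrix.traceLinearMap_apply, trace_processMap_kronecker,
    Matrix.trace_kronecker, hAq, hBq, hρ1, hσ1, mul_one]
  exact_mod_cast hp qA qB hqA hqB

end ProcessMap

theorem stmt_12_general (ιiA ιiB ιoA ιoB : Type)
    [Fintype ιiA] [Fintype ιiB] [Fintype ιoA] [Fintype ιoB]
    (p : ιiA → ιiB → ιoA → ιoB → ℝ)
    (hp0 : ∀ iA iB oA oB, 0 ≤ p iA iB oA oB) :
    (∀ (pA : ιiA → ιoA → ℝ) (pB : ιiB → ιoB → ℝ),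
      (∀ i o, 0 ≤ pA i o) → (∀ i : ιiA, ∑ o, pA i o = 1) →
      (∀ i o, 0 ≤ pB i o) → (∀ i : ιiB, ∑ o, pB i o = 1) →
      ∑ iA, ∑ iB, ∑ oA, ∑ oB, p iA iB oA oB * pA iA oA * pB iB oB = 1) ↔
    (∀ (nA mA nB mB : ℕ)
      (A : ιoA → ιiA → (Mat (Fin nA) →ₗ[ℂ] Mat (Fin mA)))
      (B : ιoB → ιiB → (Mat (Fin nB) →ₗ[ℂ] Mat (Fin mB))),
      (∀ oA iA, IsCP (A oA iA)) → (∀ iA, IsTP (∑ oA, A oA iA)) →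
      (∀ oB iB, IsCP (B oB iB)) → (∀ iB, IsTP (∑ oB, B oB iB)) →
      IsCP (∑ iA, ∑ iB, ∑ oA, ∑ oB,
          (p iA iB oA oB : ℂ) • tensorMap (A oA iA) (B oB iB)) ∧
      IsTP (∑ iA, ∑ iB, ∑ oA, ∑ oB,
          (p iA iB oA oB : ℂ) • tensorMap (A oA iA) (B oB iB))) := by
  constructor
  · intro hclassical _ _ _ _ A B hAcp hAtp hBcp hBtp
    exact ⟨isCP_processMap hp0 hAcp hBcp,
      isTP_processMap (fun qA qB hqA hqB => hclassical qA qB hqA.1 hqA.2 hqB.1 hqB.2)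
        ⟨hAcp, hAtp⟩ ⟨hBcp, hBtp⟩⟩
  · intro hquantum pA pB hA0 hA1 hB0 hB1
    obtain ⟨hAcp, hAtp⟩ := IsCondDistrib.isInstrument_smul_id (n := Fin 1) ⟨hA0, hA1⟩
    obtain ⟨hBcp, hBtp⟩ := IsCondDistrib.isInstrument_smul_id (n := Fin 1) ⟨hB0, hB1⟩
    have htrace := (hquantum 1 1 1 1 _ _ hAcp hAtp hBcp hBtp).2 (1 ⊗ₖ 1)
    rw [← processMap, trace_processMap_kronecker] at htrace
    simp only [LinearMap.smul_apply, LinearMap.id_apply, Matrix.trace_smul, Matrix.trace_kronecker,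
      Matrix.trace_one, Fintype.card_unique, Nat.cast_one, smul_eq_mul, mul_one] at htrace
    exact_mod_cast htrace

/-- for a conditional probability distribution p(i_A,i_B|o_A,o_B), pairing
to 1 with all classical channels is equivalent to producing a CPTP map from every pair of
quantum instruments. -/
theorem stmt_12 (ιiA ιiB ιoA ιoB : Type)
    [Fintype ιiA] [DecidableEq ιiA] [Fintype ιiB] [DecidableEq ιiB]
    [Fintype ιoA] [DecidableEq ιoA] [Fintype ιoB] [DecidableEq ιoB]
    (p : ιiA → ιiB → ιoA → ιoB → ℝ)
    (hp0 : ∀ iA iB oA oB, 0 ≤ p iA iB oA oB)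
    (hp1 : ∀ oA oB, ∑ iA, ∑ iB, p iA iB oA oB = 1) :
    (∀ (pA : ιiA → ιoA → ℝ) (pB : ιiB → ιoB → ℝ),
      (∀ i o, 0 ≤ pA i o) → (∀ i : ιiA, ∑ o, pA i o = 1) →
      (∀ i o, 0 ≤ pB i o) → (∀ i : ιiB, ∑ o, pB i o = 1) →
      ∑ iA, ∑ iB, ∑ oA, ∑ oB, p iA iB oA oB * pA iA oA * pB iB oB = 1) ↔
    (∀ (nA mA nB mB : ℕ)
      (A : ιoA → ιiA → (Mat (Fin nA) →ₗ[ℂ] Mat (Fin mA)))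
      (B : ιoB → ιiB → (Mat (Fin nB) →ₗ[ℂ] Mat (Fin mB))),
      (∀ oA iA, IsCP (A oA iA)) → (∀ iA, IsTP (∑ oA, A oA iA)) →
      (∀ oB iB, IsCP (B oB iB)) → (∀ iB, IsTP (∑ oB, B oB iB)) →
      IsCP (∑ iA, ∑ iB, ∑ oA, ∑ oB,
          (p iA iB oA oB : ℂ) • tensorMap (A oA iA) (B oB iB)) ∧
      IsTP (∑ iA, ∑ iB, ∑ oA, ∑ oB,
          (p iA iB oA oB : ℂ) • tensorMap (A oA iA) (B oB iB))) :=
  stmt_12_general ιiA ιiB ιoA ιoB p hp0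
end
end

section
/- Composition and marginalization consistency of causally ordered classical channels: let q(I_1,...,I_{2N}|O_1,...,O_{2N}) be a conditional probability distribution satisfying the causal-order condition q(I_1,...,I_k|O_1,...,O_{2N}) = q(I_1,...,I_k|O_1,...,O_{k−1}) for all k (marginals over later inputs depend only on earlier outputs). Define the step channels Q(J_1) := q(I_1) and Q(J_k|O_{k−1}) := q(I_1,...,I_k|O_1,...,O_{k−1}) / q(I_1,...,I_{k−1}|O_1,...,O_{k−2}) (with copying delta constraints on the history variables, and defined arbitrarily as a probability distribution where the denominator vanishes). Then each Q(·|·) is a conditional probability distribution, and the sequential composition Q(J_1)·∏_{k=2}^{2N} Q(J_k|O_{k−1}), with the history variables identified by deltas, reproduces q(I_1,...,I_{2N}|O_1,...,O_{2N}); i.e., any no-signaling (causally ordered) classical channel factors into a sequence of memory channels each depending only on the preceding output. -/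
open BigOperators

/-- any no-signaling (causally ordered) classical channel
q(I₁,…,I_{2N}|O₁,…,O_{2N}) factors into a sequence of step channels, the k-th of which
depends only on the inputs I_j with j ≤ k and the preceding outputs O_j with j < k,
each normalized over its new input, whose product reproduces q. -/
theorem stmt_19 (N : ℕ) (ιI ιO : Fin (2 * N) → Type)
    [∀ k, Fintype (ιI k)] [∀ k, DecidableEq (ιI k)] [∀ k, Fintype (ιO k)]
    (q : (∀ k, ιI k) → (∀ k, ιO k) → ℝ)
    (hq0 : ∀ I O, 0 ≤ q I O)
    (hq1 : ∀ O, ∑ I : ∀ k, ιI k, q I O = 1)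
    (hcausal : ∀ (k : ℕ) (I : ∀ j, ιI j) (O O' : ∀ j, ιO j),
      (∀ j : Fin (2 * N), (j : ℕ) + 1 < k → O j = O' j) →
      (∑ I' : ∀ j, ιI j,
        if ∀ j : Fin (2 * N), (j : ℕ) < k → I' j = I j then q I' O else 0)
      = ∑ I' : ∀ j, ιI j,
          if ∀ j : Fin (2 * N), (j : ℕ) < k → I' j = I j then q I' O' else 0) :
    ∃ Q : Fin (2 * N) → (∀ j, ιI j) → (∀ j, ιO j) → ℝ,
      (∀ k I O, 0 ≤ Q k I O) ∧
      (∀ (k : Fin (2 * N)) (I I' : ∀ j, ιI j) (O O' : ∀ j, ιO j),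
        (∀ j : Fin (2 * N), (j : ℕ) ≤ (k : ℕ) → I j = I' j) →
        (∀ j : Fin (2 * N), (j : ℕ) < (k : ℕ) → O j = O' j) →
        Q k I O = Q k I' O') ∧
      (∀ (k : Fin (2 * N)) (I : ∀ j, ιI j) (O : ∀ j, ιO j),
        ∑ x : ιI k, Q k (Function.update I k x) O = 1) ∧
      (∀ I O, ∏ k, Q k I O = q I O) := by
  classical
  set m : ℕ → (∀ k, ιI k) → (∀ k, ιO k) → ℝ := fun k I O =>
    ∑ I' : ∀ j, ιI j, if ∀ j : Fin (2 * N), (j : ℕ) < k → I' j = I j then q I' O else 0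
    with hm_def
  have hm_nonneg : ∀ k I O, 0 ≤ m k I O := by
    intro k I O
    apply Finset.sum_nonneg
    intro I' _
    split <;> [exact hq0 I' O; exact le_refl 0]
  have hm_congr : ∀ (k : ℕ) (I I' : ∀ j, ιI j) (O O' : ∀ j, ιO j),
      (∀ j : Fin (2 * N), (j : ℕ) < k → I j = I' j) →
      (∀ j : Fin (2 * N), (j : ℕ) + 1 < k → O j = O' j) →
      m k I O = m k I' O' := by
    intro k I I' O O' hI hO
    have h1 : m k I O = m k I O' := hcausal k I O O' hO
    rw [h1]
    apply Finset.sum_congr rfl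
    intro I'' _
    refine if_congr ⟨fun h j hj => (h j hj).trans (hI j hj),
      fun h j hj => (h j hj).trans (hI j hj).symm⟩ rfl rfl
  have hm_zero : ∀ I O, m 0 I O = 1 := by
    intro I O
    simp only [hm_def]
    rw [← hq1 O]
    apply Finset.sum_congr rfl
    intro I' _
    rw [if_pos]
    intro j hj
    exact absurd hj (Nat.not_lt_zero _)
  have hm_top : ∀ I O, m (2 * N) I O = q I O := by
    intro I O
    simp only [hm_def]
    rw [Finset.sum_eq_single I]
    · rw [if_pos]; intro j _; rfl
    · intro I' _ hne
      rw [if_neg]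
      intro h
      exact hne (funext fun j => h j j.isLt)
    · intro h; exact absurd (Finset.mem_univ I) h
  have hm_rec : ∀ (k : ℕ) (hk : k < 2 * N) (I : ∀ j, ιI j) (O : ∀ j, ιO j),
      m k I O = ∑ x : ιI ⟨k, hk⟩, m (k + 1) (Function.update I ⟨k, hk⟩ x) O := by
    intro k hk I O
    simp only [hm_def]
    rw [Finset.sum_comm]
    refine Finset.sum_congr rfl fun I' _ => ?_
    symm
    have hcond : ∀ x : ιI ⟨k, hk⟩,
        (∀ j : Fin (2 * N), (j : ℕ) < k + 1 → I' j = Function.update I ⟨k, hk⟩ x j)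
        ↔ ((∀ j : Fin (2 * N), (j : ℕ) < k → I' j = I j) ∧ I' ⟨k, hk⟩ = x) := by
      intro x
      constructor
      · intro h
        refine ⟨fun j hj => ?_, ?_⟩
        · have := h j (Nat.lt_succ_of_lt hj)
          rwa [Function.update_of_ne (by
            intro he; rw [he] at hj; exact lt_irrefl _ hj)] at this
        · have := h ⟨k, hk⟩ (Nat.lt_succ_self k)
          rwa [Function.update_self] at this
      · rintro ⟨h1, h2⟩ j hj
        by_cases hje : j = ⟨k, hk⟩
        · subst hje; rwa [Function.update_self]
        · rw [Function.update_of_ne hje]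
          apply h1
          rcases Nat.lt_succ_iff_lt_or_eq.mp hj with h | h
          · exact h
          · exact absurd (Fin.ext h : j = ⟨k, hk⟩) hje
    calc (∑ x : ιI ⟨k, hk⟩, if ∀ j : Fin (2 * N), (j : ℕ) < k + 1 →
            I' j = Function.update I ⟨k, hk⟩ x j then q I' O else 0)
        = ∑ x : ιI ⟨k, hk⟩, if (∀ j : Fin (2 * N), (j : ℕ) < k → I' j = I j) ∧ I' ⟨k, hk⟩ = x
            then q I' O else 0 := by
          apply Finset.sum_congr rfl
          intro x _
          exact if_congr (hcond x) rfl rfl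
      _ = if ∀ j : Fin (2 * N), (j : ℕ) < k → I' j = I j then q I' O else 0 := by
          by_cases hP : ∀ j : Fin (2 * N), (j : ℕ) < k → I' j = I j
          · rw [if_pos hP]
            have h2 : ∀ x : ιI ⟨k, hk⟩,
                (if (∀ j : Fin (2 * N), (j : ℕ) < k → I' j = I j) ∧ I' ⟨k, hk⟩ = x
                  then q I' O else 0) = if I' ⟨k, hk⟩ = x then q I' O else 0 :=
              fun x => if_congr (and_iff_right hP) rfl rfl
            rw [Finset.sum_congr rfl (fun x _ => h2 x), Finset.sum_ite_eq]
            simp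
          · rw [if_neg hP]
            apply Finset.sum_eq_zero
            intro x _
            exact if_neg (fun h => hP h.1)
  have hm_update : ∀ (k : ℕ) (hk : k < 2 * N) (x : ιI ⟨k, hk⟩) I O,
      m k (Function.update I ⟨k, hk⟩ x) O = m k I O := by
    intro k hk x I O
    apply hm_congr
    · intro j hj
      rw [Function.update_of_ne (by intro he; rw [he] at hj; exact lt_irrefl _ hj)]
    · intro j _; rfl
  have hm_zero_succ : ∀ (k : ℕ) (hk : k < 2 * N) I O,
      m k I O = 0 → m (k + 1) I O = 0 := by
    intro k hk I O h0
    have hle : m (k + 1) I O ≤ m k I O := by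
      rw [hm_rec k hk I O]
      have := Finset.single_le_sum (f := fun x : ιI ⟨k, hk⟩ =>
        m (k + 1) (Function.update I ⟨k, hk⟩ x) O)
        (fun x _ => hm_nonneg _ _ _) (Finset.mem_univ (I ⟨k, hk⟩))
      simpa using this
    exact le_antisymm (h0 ▸ hle) (hm_nonneg _ _ _)
  refine ⟨fun k I O => if m (k : ℕ) I O = 0 then ((Fintype.card (ιI k) : ℝ))⁻¹
    else m ((k : ℕ) + 1) I O / m (k : ℕ) I O, ?_, ?_, ?_, ?_⟩
  · intro k I O
    dsimp only
    split
    · positivity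
    · exact div_nonneg (hm_nonneg _ _ _) (hm_nonneg _ _ _)
  · intro k I I' O O' hI hO
    dsimp only
    have h1 : m (k : ℕ) I O = m (k : ℕ) I' O' :=
      hm_congr _ _ _ _ _ (fun j hj => hI j (le_of_lt hj))
        (fun j hj => hO j (by omega))
    have h2 : m ((k : ℕ) + 1) I O = m ((k : ℕ) + 1) I' O' :=
      hm_congr _ _ _ _ _ (fun j hj => hI j (by omega))
        (fun j hj => hO j (by omega))
    rw [h1, h2]
  · intro k I O
    dsimp only
    have hmu : ∀ x : ιI k, m (k : ℕ) (Function.update I k x) O = m (k : ℕ) I O := by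
      intro x
      have := hm_update (k : ℕ) k.isLt x I O
      simpa using this
    by_cases h0 : m (k : ℕ) I O = 0
    · have : ∀ x : ιI k, (if m (k : ℕ) (Function.update I k x) O = 0
          then ((Fintype.card (ιI k) : ℝ))⁻¹
          else m ((k : ℕ) + 1) (Function.update I k x) O / m (k : ℕ) (Function.update I k x) O)
          = ((Fintype.card (ιI k) : ℝ))⁻¹ := by
        intro x; rw [if_pos]; rw [hmu x]; exact h0
      rw [Finset.sum_congr rfl (fun x _ => this x)]
      rw [Finset.sum_const, Finset.card_univ, nsmul_eq_mul]
      have : Nonempty (ιI k) := ⟨I k⟩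
      rw [mul_inv_cancel₀]
      exact_mod_cast Fintype.card_ne_zero
    · have : ∀ x : ιI k, (if m (k : ℕ) (Function.update I k x) O = 0
          then ((Fintype.card (ιI k) : ℝ))⁻¹
          else m ((k : ℕ) + 1) (Function.update I k x) O / m (k : ℕ) (Function.update I k x) O)
          = m ((k : ℕ) + 1) (Function.update I k x) O / m (k : ℕ) I O := by
        intro x; rw [hmu x, if_neg h0]
      rw [Finset.sum_congr rfl (fun x _ => this x), ← Finset.sum_div]
      have := hm_rec (k : ℕ) k.isLt I O
      simp only [Fin.eta] at this
      rw [← this, div_self h0]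
  · intro I O
    set Q : Fin (2 * N) → ℝ := fun k => if m (k : ℕ) I O = 0
      then ((Fintype.card (ιI k) : ℝ))⁻¹
      else m ((k : ℕ) + 1) I O / m (k : ℕ) I O with hQ_def
    have key : ∀ n, n ≤ 2 * N →
        (∏ k : Fin (2 * N), if (k : ℕ) < n then Q k else 1) = m n I O ∨
        ((∏ k : Fin (2 * N), if (k : ℕ) < n then Q k else 1) = 0 ∧ m n I O = 0) := by
      intro n hn
      induction n with
      | zero =>
        left
        rw [hm_zero I O]
        apply Finset.prod_eq_one
        intro k _
        rw [if_neg (Nat.not_lt_zero _)]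
      | succ n ih =>
        have hn' : n < 2 * N := hn
        have hstep : (∏ k : Fin (2 * N), if (k : ℕ) < n + 1 then Q k else 1)
            = (∏ k : Fin (2 * N), if (k : ℕ) < n then Q k else 1) * Q ⟨n, hn'⟩ := by
          have : ∀ k : Fin (2 * N), (if (k : ℕ) < n + 1 then Q k else 1)
              = (if (k : ℕ) < n then Q k else 1) * (if k = ⟨n, hn'⟩ then Q k else 1) := by
            intro k
            by_cases h1 : (k : ℕ) < n
            · rw [if_pos (Nat.lt_succ_of_lt h1), if_pos h1,
                if_neg (by intro he; rw [he] at h1; exact lt_irrefl _ h1), mul_one]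
            · by_cases h2 : k = ⟨n, hn'⟩
              · rw [if_pos (by rw [h2]; exact Nat.lt_succ_self n), if_neg h1, if_pos h2, one_mul]
              · rw [if_neg (by
                  intro h
                  rcases Nat.lt_succ_iff_lt_or_eq.mp h with h | h
                  · exact h1 h
                  · exact h2 (Fin.ext h)), if_neg h1, if_neg h2, mul_one]
          rw [Finset.prod_congr rfl (fun k _ => this k), Finset.prod_mul_distrib]
          congr 1
          rw [Finset.prod_ite_eq' Finset.univ (⟨n, hn'⟩ : Fin (2 * N)) Q]
          simp
        rcases ih (le_of_lt hn') with h | ⟨h1, h2⟩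
        · by_cases h0 : m n I O = 0
          · right
            constructor
            · rw [hstep, h, h0, zero_mul]
            · exact hm_zero_succ n hn' I O h0
          · left
            rw [hstep, h, hQ_def]
            simp only
            rw [if_neg h0, mul_comm, div_mul_cancel₀ _ h0]
        · right
          refine ⟨by rw [hstep, h1, zero_mul], hm_zero_succ n hn' I O h2⟩
    have hfull : (∏ k : Fin (2 * N), if (k : ℕ) < 2 * N then Q k else 1)
        = ∏ k : Fin (2 * N), Q k := by
      apply Finset.prod_congr rfl
      intro k _
      rw [if_pos k.isLt]
    rcases key (2 * N) le_rfl with h | ⟨h1, h2⟩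
    · rw [← hfull, h, hm_top]
    · rw [← hfull, h1, ← hm_top I O, h2]
end
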